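/- For odd n > 5, the set of synchronizing words of the automaton K_n has maximal state complexity: sc(Syn(K_n)) = 2^n - n. -/

import Mathlib

/-!
The minimal DFA of `Syn δ` is the reachable part of the power automaton with all singletons merged
into one state. Hence `sc (Syn δ) = 2 ^ |Q| - |Q|` as soon as every nonempty subset of states is
reachable and any two distinct subsets with at least two elements are distinguishable.

For `K_n` with `n` odd both hold. The word `b^(n-3) a` fixes `1` and `3` and moves every other
state two steps back; since `2` is invertible modulo `n`, its `n`-th power sends every state except
`1` to `3`, so preceded by a shift moving `p` onto `1` it separates `p` from all other states.
For reachability, a nonempty proper `S` contains some `x` with `x - 4 ∉ S` (as `4` is invertible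
modulo `n`). The letter `a` merges `0` and `2` and misses only `n - 1`, so the word `a b^k` that
sends `0` and `2` to `x` misses only `x - 4`; thus `S` is the image of a strictly larger set.
-/

open Finset

universe u v

variable {Q : Type u} {A : Type v}

/-- Extended transition function on words (lists of letters). -/
def dw (δ : Q → A → Q) (q : Q) (w : List A) : Q := w.foldl δ q

/-- A subset `S` of the state set is reachable if it is the image of the
full state set under some word. -/
def reach [Fintype Q] [DecidableEq Q] (δ : Q → A → Q) (S : Finset Q) : Prop :=
  ∃ w : List A, Finset.univ.image (fun q => dw δ q w) = S

/-- Rank of a word: cardinality of the image of the state set under it. -/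
def rkw [Fintype Q] [DecidableEq Q] (δ : Q → A → Q) (w : List A) : ℕ :=
  (Finset.univ.image (fun q => dw δ q w)).card

/-- Rank of a letter. -/
def rkl [Fintype Q] [DecidableEq Q] (δ : Q → A → Q) (a : A) : ℕ :=
  (Finset.univ.image (fun q => δ q a)).card

/-- A map is a cyclic permutation with a single orbit. -/
def isCyclicPerm (f : Q → Q) : Prop :=
  Function.Bijective f ∧ ∀ p q : Q, ∃ k : ℕ, f^[k] p = q

/-- Two subsets of states are distinguishable in the power automaton:
some word maps exactly one of them to a singleton. -/
def distinguishable [DecidableEq Q] (δ : Q → A → Q) (S T : Finset Q) : Prop :=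
  ∃ u : List A,
    Xor' ((S.image (fun q => dw δ q u)).card = 1)
         ((T.image (fun q => dw δ q u)).card = 1)

/-- The set of synchronizing words. -/
def Syn [Fintype Q] [DecidableEq Q] (δ : Q → A → Q) : Set (List A) :=
  {w | (Finset.univ.image (fun q => dw δ q w)).card = 1}

/-- The Nerode right-congruence of a language. -/
def nerode (L : Set (List A)) : Setoid (List A) where
  r u v := ∀ x : List A, u ++ x ∈ L ↔ v ++ x ∈ L
  iseqv := ⟨fun _ _ => Iff.rfl, fun h x => (h x).symm, fun h1 h2 x => (h1 x).trans (h2 x)⟩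

/-- State complexity of a language: number of Nerode classes. -/
noncomputable def sc (L : Set (List A)) : ℕ := Nat.card (Quotient (nerode L))

/-- Complete reachability. -/
def complReach [Fintype Q] [DecidableEq Q] (δ : Q → A → Q) : Prop :=
  ∀ S : Finset Q, S.Nonempty → ∃ w : List A, Finset.univ.image (fun q => dw δ q w) = S

/-- The permutation group generated by the permutational letters. -/
def permGroup [Fintype Q] [DecidableEq Q] (δ : Q → A → Q) : Subgroup (Equiv.Perm Q) :=
  Subgroup.closure {π : Equiv.Perm Q | ∃ a : A, ∀ q : Q, π q = δ q a}

/-- The transition function of the automaton `K_n`; the letter `true` is `b`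
(the cyclic permutation) and `false` is `a`. -/
def Kdelta (n : ℕ) [NeZero n] (i : Fin n) (c : Bool) : Fin n :=
  if c then i + 1
  else if i.val = 0 then ⟨3 % n, Nat.mod_lt 3 (NeZero.pos n)⟩
  else if i.val = n - 1 then ⟨0, NeZero.pos n⟩
  else if i.val = n - 2 then ⟨1 % n, Nat.mod_lt 1 (NeZero.pos n)⟩
  else i + 1

open Finset

section Words

variable (δ : Q → A → Q)

theorem dw_append (q : Q) (u v : List A) : dw δ q (u ++ v) = dw δ (dw δ q u) v :=
  List.foldl_append ..

theorem dw_replicate (q : Q) (k : ℕ) (a : A) :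
    dw δ q (List.replicate k a) = (fun q => δ q a)^[k] q := by
  induction k generalizing q with
  | zero => rfl
  | succ k ih => rw [List.replicate_succ, Function.iterate_succ_apply]; exact ih (δ q a)

theorem dw_flatten_replicate (q : Q) (k : ℕ) (w : List A) :
    dw δ q (List.replicate k w).flatten = (fun q => dw δ q w)^[k] q := by
  induction k generalizing q with
  | zero => rfl
  | succ k ih =>
    rw [List.replicate_succ, List.flatten_cons, dw_append, Function.iterate_succ_apply, ih]

end Words

section MergeSingletons

/-- `∅` stands for the class of all singletons; it is never the image of a word. -/
def mergeSingletons (S : Finset Q) : Finset Q := if S.card = 1 then ∅ else S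

theorem card_mergeSingletons_ne_one (S : Finset Q) : (mergeSingletons S).card ≠ 1 := by
  unfold mergeSingletons
  split_ifs with h <;> simp [h]

theorem card_finset_card_ne_one [Fintype Q] :
    Nat.card {S : Finset Q // S.card ≠ 1} = 2 ^ Fintype.card Q - Fintype.card Q := by
  rw [Nat.card_eq_fintype_card, Fintype.card_subtype_compl, Fintype.card_finset,
    Fintype.card_finset_len, Nat.choose_one_right]

end MergeSingletons

section Distinguishable

variable [DecidableEq Q] {δ : Q → A → Q}

theorem distinguishable_iff {S T : Finset Q} :
    distinguishable δ S T ↔ ∃ u : List A,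
      ¬((S.image fun q => dw δ q u).card = 1 ↔ (T.image fun q => dw δ q u).card = 1) :=
  exists_congr fun _ => xor_iff_not_iff _ _

theorem distinguishable_comm {S T : Finset Q} :
    distinguishable δ S T ↔ distinguishable δ T S := by
  simp only [distinguishable_iff, iff_comm]

theorem not_distinguishable_iff
    (hdist : ∀ S T : Finset Q, 2 ≤ S.card → 2 ≤ T.card → S ≠ T → distinguishable δ S T)
    {S T : Finset Q} (hS : S.Nonempty) (hT : T.Nonempty) :
    ¬ distinguishable δ S T ↔ mergeSingletons S = mergeSingletons T := by
  have hS0 := hS.card_pos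
  have hT0 := hT.card_pos
  have by_nil : ∀ {S T : Finset Q}, S.card = 1 → T.card ≠ 1 → distinguishable δ S T :=
    fun hS hT => distinguishable_iff.mpr ⟨[], by simp [dw, hS, hT]⟩
  unfold mergeSingletons
  split_ifs with h1 h2 h2
  · obtain ⟨a, rfl⟩ := card_eq_one.mp h1
    obtain ⟨b, rfl⟩ := card_eq_one.mp h2
    simp [distinguishable_iff]
  · exact iff_of_false (not_not.mpr (by_nil h1 h2)) (by simpa [eq_comm] using hT.ne_empty)
  · exact iff_of_false (not_not.mpr (distinguishable_comm.mp (by_nil h2 h1)))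
      (by simpa using hS.ne_empty)
  · refine ⟨fun h => by_contra fun hne => h (hdist S T (by omega) (by omega) hne), ?_⟩
    rintro rfl
    simp [distinguishable_iff]

theorem distinguishable_of_separating_word {p : Q} {w : List A} {c : Q}
    (hp : dw δ p w ≠ c) (hsep : ∀ q ≠ p, dw δ q w = c)
    {S T : Finset Q} (hS : 2 ≤ S.card) (hT : T.Nonempty) (hpS : p ∈ S) (hpT : p ∉ T) :
    distinguishable δ S T := by
  have hTc : (T.image fun q => dw δ q w) = {c} := by
    rw [image_congr fun q hq => hsep q (ne_of_mem_of_not_mem hq hpT), image_const hT]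
  obtain ⟨q, hqS, hqp⟩ := exists_mem_ne hS p
  have hSc : 1 < (S.image fun q => dw δ q w).card :=
    one_lt_card.mpr ⟨_, mem_image_of_mem _ hpS, _, mem_image_of_mem _ hqS, by rwa [hsep q hqp]⟩
  exact distinguishable_iff.mpr ⟨w, by rw [hTc, card_singleton]; omega⟩

theorem distinguishable_of_separating
    (hsep : ∀ p : Q, ∃ w c, dw δ p w ≠ c ∧ ∀ q ≠ p, dw δ q w = c)
    {S T : Finset Q} (hS : 2 ≤ S.card) (hT : 2 ≤ T.card) (hST : S ≠ T) :
    distinguishable δ S T := by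
  by_cases hsub : S ⊆ T
  · obtain ⟨p, hpT, hpS⟩ := not_subset.mp fun h => hST (hsub.antisymm h)
    obtain ⟨w, c, hp, hq⟩ := hsep p
    exact distinguishable_comm.mp
      (distinguishable_of_separating_word hp hq hT (card_pos.mp (by omega)) hpT hpS)
  · obtain ⟨p, hpS, hpT⟩ := not_subset.mp hsub
    obtain ⟨w, c, hp, hq⟩ := hsep p
    exact distinguishable_of_separating_word hp hq hS (card_pos.mp (by omega)) hpS hpT

end Distinguishable

section PowerAutomaton

variable [Fintype Q] [DecidableEq Q] (δ : Q → A → Q)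

def wordImage (w : List A) : Finset Q := univ.image fun q => dw δ q w

theorem wordImage_append (u x : List A) :
    wordImage δ (u ++ x) = (wordImage δ u).image fun q => dw δ q x := by
  simp only [wordImage, image_image, Function.comp_def, dw_append]

theorem wordImage_nonempty [Nonempty Q] (w : List A) : (wordImage δ w).Nonempty :=
  univ_nonempty.image _

theorem nerode_Syn_iff (u v : List A) :
    nerode (Syn δ) u v ↔ ¬ distinguishable δ (wordImage δ u) (wordImage δ v) := by
  show (∀ x, (wordImage δ (u ++ x)).card = 1 ↔ (wordImage δ (v ++ x)).card = 1) ↔ _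
  simp only [wordImage_append, distinguishable_iff, not_exists, not_not]

variable {δ}

theorem range_mergeSingletons_wordImage [Nonempty Q] (hreach : complReach δ) :
    Set.range (fun w => mergeSingletons (wordImage δ w)) = {S | S.card ≠ 1} := by
  refine Set.Subset.antisymm (Set.range_subset_iff.mpr fun w => card_mergeSingletons_ne_one _)
    fun S hS => ?_
  rcases S.eq_empty_or_nonempty with rfl | hne
  · obtain ⟨w, hw⟩ := hreach {Classical.arbitrary Q} (singleton_nonempty _)
    exact ⟨w, by simp [mergeSingletons, wordImage, hw]⟩
  · obtain ⟨w, hw⟩ := hreach S hne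
    exact ⟨w, by simp [mergeSingletons, wordImage, hw, hS.out]⟩

theorem sc_Syn_eq [Nonempty Q] (hreach : complReach δ)
    (hdist : ∀ S T : Finset Q, 2 ≤ S.card → 2 ≤ T.card → S ≠ T → distinguishable δ S T) :
    sc (Syn δ) = 2 ^ Fintype.card Q - Fintype.card Q := by
  have hker : nerode (Syn δ) = Setoid.ker fun w => mergeSingletons (wordImage δ w) :=
    Setoid.ext fun u v => (nerode_Syn_iff δ u v).trans
      (not_distinguishable_iff hdist (wordImage_nonempty δ u) (wordImage_nonempty δ v))
  rw [sc, hker, Nat.card_congr (Setoid.quotientKerEquivRange _),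
    range_mergeSingletons_wordImage hreach]
  exact card_finset_card_ne_one

theorem complReach_of_exists_word
    (h : ∀ S : Finset Q, S.Nonempty → S ≠ univ → ∃ w, (∀ s ∈ S, ∃ q, dw δ q w = s) ∧
      ∃ p q, p ≠ q ∧ dw δ p w = dw δ q w ∧ dw δ p w ∈ S) :
    complReach δ := by
  intro S hS
  induction hk : Fintype.card Q - S.card using Nat.strong_induction_on generalizing S with
  | _ k ih =>
  by_cases hSu : S = univ
  · exact ⟨[], by simp [hSu, dw]⟩
  obtain ⟨w, hsurj, p, q, hpq, hpq', hpS⟩ := h S hS hSu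
  set T := univ.filter fun r => dw δ r w ∈ S
  have hTS : T.image (fun r => dw δ r w) = S := by
    ext s
    simp only [mem_image, T, mem_filter, mem_univ, true_and]
    exact ⟨fun ⟨r, hr, hrs⟩ => hrs ▸ hr,
      fun hs => (hsurj s hs).imp fun r hr => ⟨by rwa [hr], hr⟩⟩
  have hST : S.card < T.card := by
    refine lt_of_le_of_ne (hTS ▸ card_image_le) fun hcard => hpq ?_
    have hinj : Set.InjOn (fun r => dw δ r w) T := card_image_iff.mp (by rw [hTS]; exact hcard)
    exact hinj (by simpa [T] using hpS) (by simpa [T, ← hpq'] using hpS) hpq'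
  obtain ⟨v, hv⟩ := ih _ (by have := card_le_univ T; omega) T (card_pos.mp (by omega)) rfl
  exact ⟨v ++ w, by rw [← hTS, ← hv]; exact wordImage_append δ v w⟩

end PowerAutomaton

theorem Function.iterate_eq_of_eq_add_nsmul {G : Type*} [AddGroup G] {f : G → G} {c d : G}
    (hc : f c = c) (hf : ∀ x, x ≠ c → x ≠ c - d → f x = x - d) (t : ℕ) {x : G}
    (hx : x ≠ c - d) (hxt : x = c + t • d) : f^[t] x = c := by
  induction t generalizing x with
  | zero => simpa using hxt
  | succ t ih =>
    by_cases hxc : x = c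
    · rw [hxc, Function.iterate_fixed hc]
    have hfx : f x = c + t • d := by
      rw [hf x hxc hx, hxt, succ_nsmul, ← add_assoc, add_sub_cancel_right]
    rw [Function.iterate_succ_apply]
    refine ih (fun h => hxc ?_) hfx
    rw [hf x hxc hx] at h
    exact sub_left_injective h

section Kn

open Fin.CommRing

variable {n : ℕ} [NeZero n]

theorem Fin.exists_natCast_mul_eq {c : Fin n} (hc : IsUnit c) (y : Fin n) :
    ∃ m < n, (m : Fin n) * c = y := by
  obtain ⟨u, rfl⟩ := hc
  exact ⟨(y * ↑u⁻¹).val, (y * ↑u⁻¹).isLt, by rw [Fin.cast_val_eq_self, mul_assoc,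
    Units.inv_mul, mul_one]⟩

theorem Fin.isUnit_two_of_odd (hodd : Odd n) : IsUnit (2 : Fin n) := by
  obtain ⟨k, rfl⟩ := hodd
  refine IsUnit.of_mul_eq_one ((k + 1 : ℕ) : Fin (2 * k + 1)) ?_
  have h : ((2 * k + 1 : ℕ) : Fin (2 * k + 1)) = 0 := Fin.natCast_self _
  push_cast at h ⊢
  linear_combination h

theorem Fin.eq_univ_of_forall_sub_mem {c : Fin n} (hc : IsUnit c) {S : Finset (Fin n)}
    (hS : S.Nonempty) (h : ∀ s ∈ S, s - c ∈ S) : S = univ := by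
  obtain ⟨s, hs⟩ := hS
  have hmul : ∀ m : ℕ, s - m * c ∈ S := by
    intro m
    induction m with
    | zero => simpa using hs
    | succ m ih => convert h _ ih using 1; push_cast; ring
  refine eq_univ_of_forall fun q => ?_
  obtain ⟨m, -, hm⟩ := Fin.exists_natCast_mul_eq hc (s - q)
  simpa [hm] using hmul m

theorem Fin.natCast_ne_zero_of_lt {k : ℕ} (h0 : 0 < k) (hk : k < n) : (k : Fin n) ≠ 0 :=
  (CharP.cast_eq_zero_iff (Fin n) n k).not.mpr (Nat.not_dvd_of_pos_of_lt h0 hk)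

theorem Fin.two_ne_zero_of_lt (hn : 2 < n) : (2 : Fin n) ≠ 0 := by
  exact_mod_cast Fin.natCast_ne_zero_of_lt two_pos hn

theorem Kdelta_false (hn : 2 < n) (i : Fin n) :
    Kdelta n i false = if i = 0 then 3 else if i = -2 then 1 else i + 1 := by
  have h2 : (-2 : Fin n).val = n - 2 := by
    rw [Fin.val_neg, if_neg (Fin.two_ne_zero_of_lt hn), Fin.coe_ofNat_eq_mod, Nat.mod_eq_of_lt hn]
  have hi := i.isLt
  unfold Kdelta
  simp only [Bool.false_eq_true, if_false, Fin.ext_iff, h2, Fin.val_zero]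
  split_ifs <;> first | rfl | omega | simp_all [Fin.val_add, Nat.sub_add_cancel NeZero.one_le]

theorem dw_Kdelta_replicate_true (q : Fin n) (k : ℕ) :
    dw (Kdelta n) q (List.replicate k true) = q + k := by
  rw [dw_replicate, show (fun q => Kdelta n q true) = (· + 1) from rfl, add_right_iterate]
  simp

def Kdescent (n : ℕ) : List Bool := List.replicate (n - 3) true ++ [false]

theorem dw_Kdescent (hn : 2 < n) (x : Fin n) :
    dw (Kdelta n) x (Kdescent n) = if x = 3 then 3 else if x = 1 then 1 else x - 2 := by
  have h3 : ((n - 3 : ℕ) : Fin n) = -3 := by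
    rw [Nat.cast_sub (show 3 ≤ n from hn), Fin.natCast_self, Nat.cast_ofNat, zero_sub]
  have h1 : x - 3 = -2 ↔ x = 1 := by constructor <;> intro h <;> linear_combination h
  have h2 : x - 3 + 1 = x - 2 := by ring
  rw [Kdescent, dw_append, dw_Kdelta_replicate_true, h3, ← sub_eq_add_neg]
  simp only [dw, List.foldl_cons, List.foldl_nil, Kdelta_false hn, sub_eq_zero, h1, h2]

theorem Fin.one_ne_three (hn : 2 < n) : (1 : Fin n) ≠ 3 :=
  fun h => Fin.two_ne_zero_of_lt hn (by linear_combination -h)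

theorem Kn_separating (hodd : Odd n) (hn : 2 < n) (p : Fin n) :
    ∃ w c, dw (Kdelta n) p w ≠ c ∧ ∀ q ≠ p, dw (Kdelta n) q w = c := by
  set f := fun x => dw (Kdelta n) x (Kdescent n)
  have h31 : (3 : Fin n) - 2 = 1 := by norm_num
  have hf1 : f 1 = 1 := by simp [f, dw_Kdescent hn, Fin.one_ne_three hn]
  have hf3 : f 3 = 3 := by simp [f, dw_Kdescent hn]
  have hstep : ∀ x, x ≠ 3 → x ≠ 3 - 2 → f x = x - 2 := by
    intro x hx3 hx1
    rw [h31] at hx1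
    simp [f, dw_Kdescent hn, hx3, hx1]
  set w := List.replicate (1 - p).val true ++ (List.replicate n (Kdescent n)).flatten
  have hw : ∀ q, dw (Kdelta n) q w = f^[n] (q + (1 - p)) := by
    intro q
    rw [dw_append, dw_Kdelta_replicate_true, Fin.cast_val_eq_self, dw_flatten_replicate]
  refine ⟨w, 3, ?_, fun q hqp => ?_⟩
  · rw [hw, add_sub_cancel, Function.iterate_fixed hf1]
    exact Fin.one_ne_three hn
  · set x := q + (1 - p)
    have hx : x ≠ 3 - 2 := by
      rw [h31]
      exact fun h => hqp (by linear_combination h)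
    obtain ⟨t, htn, ht⟩ := Fin.exists_natCast_mul_eq (Fin.isUnit_two_of_odd hodd) (x - 3)
    have hft : f^[t] x = 3 :=
      Function.iterate_eq_of_eq_add_nsmul hf3 hstep t hx (by rw [nsmul_eq_mul, ht]; ring)
    calc dw (Kdelta n) q w = f^[n - t] (f^[t] x) := by
          rw [hw, ← Function.iterate_add_apply, Nat.sub_add_cancel htn.le]
      _ = 3 := by rw [hft, Function.iterate_fixed hf3]

theorem exists_Kdelta_false_eq (hn : 2 < n) {y : Fin n} (hy : y ≠ -1) :
    ∃ q, Kdelta n q false = y := by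
  by_cases hy1 : y = 1
  · refine ⟨-2, ?_⟩
    rw [Kdelta_false hn, if_neg (neg_ne_zero.mpr (Fin.two_ne_zero_of_lt hn)), if_pos rfl, hy1]
  · refine ⟨y - 1, ?_⟩
    rw [Kdelta_false hn, if_neg fun h => hy1 (by linear_combination h),
      if_neg fun h => hy (by linear_combination h), sub_add_cancel]

theorem Kn_exists_expanding_word (hodd : Odd n) (hn : 4 < n) (S : Finset (Fin n))
    (hS : S.Nonempty) (hSu : S ≠ univ) :
    ∃ w, (∀ s ∈ S, ∃ q, dw (Kdelta n) q w = s) ∧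
      ∃ p q, p ≠ q ∧ dw (Kdelta n) p w = dw (Kdelta n) q w ∧ dw (Kdelta n) p w ∈ S := by
  have hunit4 : IsUnit (4 : Fin n) := by
    simpa [show (4 : Fin n) = 2 * 2 by norm_num] using
      (Fin.isUnit_two_of_odd hodd).mul (Fin.isUnit_two_of_odd hodd)
  obtain ⟨x, hxS, hx4⟩ : ∃ x ∈ S, x - 4 ∉ S := by
    by_contra! h
    exact hSu (Fin.eq_univ_of_forall_sub_mem hunit4 hS h)
  have hw : ∀ q, dw (Kdelta n) q (false :: List.replicate (x - 3).val true) =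
      Kdelta n q false + (x - 3) := fun q =>
    (dw_Kdelta_replicate_true _ _).trans (by rw [Fin.cast_val_eq_self])
  have hA0 : Kdelta n 0 false = 3 := by rw [Kdelta_false (by omega), if_pos rfl]
  have hA2 : Kdelta n 2 false = 3 := by
    have h4 : (4 : Fin n) ≠ 0 := by
      exact_mod_cast Fin.natCast_ne_zero_of_lt (k := 4) four_pos hn
    have h2 : (2 : Fin n) ≠ -2 := fun h => h4 (by linear_combination h)
    rw [Kdelta_false (by omega), if_neg (Fin.two_ne_zero_of_lt (by omega)), if_neg h2]
    norm_num
  refine ⟨_, fun s hs => ?_, 0, 2, (Fin.two_ne_zero_of_lt (by omega)).symm,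
    by rw [hw, hw, hA0, hA2], by rwa [hw, hA0, add_sub_cancel]⟩
  obtain ⟨q, hq⟩ := exists_Kdelta_false_eq (by omega) (y := s - (x - 3))
    fun h => hx4 (by rwa [show x - 4 = s by linear_combination -h])
  exact ⟨q, by rw [hw, hq, sub_add_cancel]⟩

theorem Kn_complReach (hodd : Odd n) (hn : 4 < n) : complReach (Kdelta n) :=
  complReach_of_exists_word (Kn_exists_expanding_word hodd hn)

end Kn

theorem Kn_sc_max (n : ℕ) [NeZero n] (hodd : Odd n) (hn : 5 < n) :
    sc (Syn (Kdelta n)) = 2 ^ n - n := by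
  simpa using sc_Syn_eq (Kn_complReach hodd (by omega))
    fun _ _ => distinguishable_of_separating (Kn_separating hodd (by omega))
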